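/- Fix δ > 0 and let φ satisfy the smoothness assumption. (a) If φ(x) ~ x log x as x → ∞ and the probability measure P₀ on ℝ is either heavy-tailed with index γ > 1 or has Weibull-type tails with index γ < 1, then there exists a probability measure P₁ ∈ B_{φ,δ}(P₀) with ∫ max(z,0) dP₁(z) = ∞. (b) If instead φ is regularly varying with index p > 1 and P₀ is heavy-tailed with index γ satisfying 1 < γ < p/(p−1), then there exists P₁ ∈ B_{φ,δ}(P₀) with ∫ max(z,0) dP₁(z) = ∞. -/

import Mathlib

open MeasureTheory Filter Set
open scoped ENNReal NNReal Topology Classical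

noncomputable section

/-- `f` is regularly varying at infinity with index `ρ`:
`f (t*x) / f t → x ^ ρ` as `t → ∞` for every `x > 0`.  Slowly varying means index `0`. -/
def RegVary (f : ℝ → ℝ) (ρ : ℝ) : Prop :=
  ∀ x : ℝ, 0 < x → Tendsto (fun t : ℝ => f (t * x) / f t) atTop (𝓝 (x ^ ρ))

/-- Value-at-Risk at level `1 - s`: `v_{1-s}(P) = inf {u | P((u,∞)) ≤ s}`. -/
def VaR (P : Measure ℝ) (s : ℝ) : ℝ :=
  sInf {u : ℝ | P (Ioi u) ≤ ENNReal.ofReal s}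

/-- `w` is a weight function with tail parameters `κ` and slowly varying `ℓ`:
nonnegative on `(0,1]`, integrates to one, and `w(t) ~ t^κ ℓ(1/t)` as `t → 0⁺`. -/
structure IsWeight (w : ℝ → ℝ) (κ : ℝ) (ℓ : ℝ → ℝ) : Prop where
  nonneg : ∀ t ∈ Ioc (0:ℝ) 1, 0 ≤ w t
  total : (∫ t in Ioc (0:ℝ) 1, w t) = 1
  kappa_gt : -1 < κ
  slow : RegVary ℓ 0
  asym : Tendsto (fun t : ℝ => w t / (t ^ κ * ℓ (1 / t))) (𝓝[>] (0:ℝ)) (𝓝 1)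

/-- Tail-weighted risk measure `ρ_{1-β}(P) = ∫₀¹ w(t) v_{1-βt}(P) dt`, `[0,∞]`-valued. -/
def tailRisk (w : ℝ → ℝ) (β : ℝ) (P : Measure ℝ) : ℝ≥0∞ :=
  ∫⁻ t in Ioc (0:ℝ) 1, ENNReal.ofReal (w t * VaR P (β * t))

/-- Worst-case risk over a set of measures. -/
def worstRisk (w : ℝ → ℝ) (β : ℝ) (S : Set (Measure ℝ)) : ℝ≥0∞ :=
  ⨆ P ∈ S, tailRisk w β P

/-- Worst-case Value-at-Risk over a set of measures. -/
def worstVaR (S : Set (Measure ℝ)) (s : ℝ) : ℝ :=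
  ⨆ P ∈ S, VaR P s

/-- Survival function `F̄_P(x) = P((x,∞))`. -/
def survival (P : Measure ℝ) (x : ℝ) : ℝ := (P (Ioi x)).toReal

/-- `P` is heavy-tailed with index `γ`: its survival function is `RV(-γ)`. -/
def HeavyTailed (P : Measure ℝ) (γ : ℝ) : Prop := RegVary (survival P) (-γ)

/-- Cumulative hazard `Λ_P(x) = - log P((x,∞))`. -/
def hazard (P : Measure ℝ) (x : ℝ) : ℝ := - Real.log (survival P x)

/-- `P` has Weibull-type tails with index `γ`: its cumulative hazard is `RV(γ)`. -/
def WeibullTailed (P : Measure ℝ) (γ : ℝ) : Prop := RegVary (hazard P) γ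

/-- Couplings of two measures on `ℝ`. -/
def Couplings (P R : Measure ℝ) : Set (Measure (ℝ × ℝ)) :=
  {π | π.map Prod.fst = P ∧ π.map Prod.snd = R}

/-- `p`-Wasserstein distance. -/
def Wdist (p : ℝ) (P R : Measure ℝ) : ℝ≥0∞ :=
  (⨅ π ∈ Couplings P R, ∫⁻ z : ℝ × ℝ, ENNReal.ofReal (|z.1 - z.2| ^ p) ∂π) ^ (1 / p)

/-- Wasserstein ball of radius `δ` around `P₀`. -/
def WBall (p δ : ℝ) (P₀ : Measure ℝ) : Set (Measure ℝ) :=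
  {P | IsProbabilityMeasure P ∧ Wdist p P P₀ ≤ ENNReal.ofReal δ}

/-- `φ`-divergence `D_φ(P,R)`, equal to `+∞` unless `P ≪ R`. -/
def phiDiv {α : Type*} [MeasurableSpace α] (φ : ℝ → ℝ) (P R : Measure α) : ℝ≥0∞ :=
  if P ≪ R then lintegral R (fun x => ENNReal.ofReal (φ (P.rnDeriv R x).toReal)) else ⊤

/-- `φ`-divergence ball of radius `δ` around `R`. -/
def phiBall {α : Type*} [MeasurableSpace α] (φ : ℝ → ℝ) (δ : ℝ) (R : Measure α) :
    Set (Measure α) :=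
  {P | IsProbabilityMeasure P ∧ phiDiv φ P R ≤ ENNReal.ofReal δ}

/-- The smoothness assumption on `φ`: twice differentiable, convex,
`φ(1) = φ'(1) = 0`, and `φ(x)/x → ∞`. -/
structure PhiSmooth (φ : ℝ → ℝ) : Prop where
  nonneg : ∀ x : ℝ, 0 ≤ x → 0 ≤ φ x
  diff1 : Differentiable ℝ φ
  diff2 : Differentiable ℝ (deriv φ)
  convex : ConvexOn ℝ (Ici 0) φ
  at_one : φ 1 = 0
  deriv_one : deriv φ 1 = 0
  superlinear : Tendsto (fun x : ℝ => φ x / x) atTop atTop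

/-- Conditional Value-at-Risk `C_{1-β}(P) = β⁻¹ ∫₀^β v_{1-s}(P) ds`. -/
def CVaR (β : ℝ) (P : Measure ℝ) : ℝ := β⁻¹ * ∫ s in Ioc (0:ℝ) β, VaR P s

/-!
The `φ`-divergence ball is star-shaped around `P₀`: by convexity of `φ` and `φ 1 = 0`, mixing
`P₀` with weight `t` against any `ν ≪ P₀` multiplies the divergence by at most `t`. So it suffices
to exhibit one probability measure `ν` at finite divergence from `P₀` with infinite positive mean.

Take `ν` to carry the mass `2⁻¹ ^ (j + 1)` on the dyadic block `(x₀ 2 ^ j, x₀ 2 ^ (j + 1)]`,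
spread proportionally to `P₀`; its mean is at least `∑ x₀ / 2 = ∞`. With `Q j` the `P₀`-mass of
the `j`-th block, the divergence is at most `φ 0 + ∑ Q j φ (2⁻¹ ^ (j + 1) / Q j)`, and as soon as
`F̄` shrinks by a factor `c < 1` per doubling, `Q j` is comparable to `F̄ (x₀ 2 ^ j)`.
* (a) `φ y ≲ y log y` reduces finiteness to `∑ 2⁻ʲ Λ (x₀ 2 ^ j) < ∞`, which holds because
  `Λ (2t) ≤ u Λ t` with `u < 2`: a heavy tail adds only a bounded amount of hazard per doubling,
  a Weibull tail multiplies it by about `2 ^ γ`.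
* (b) Potter's bound `φ y ≲ y ^ q` for `q` slightly above `p` turns the terms into
  `2 ^ (-q j) F̄ (x₀ 2 ^ j) ^ (1 - q) ≲ 2 ^ (-q j + γ' (q - 1) j)` for any `γ' > γ`, a geometric
  series once `γ' (q - 1) < q`, which the window `γ < p / (p - 1)` leaves room for.
-/

open Function

section PhiDivergence

variable {α : Type*} [MeasurableSpace α] {φ : ℝ → ℝ}

lemma absolutelyContinuous_of_phiDiv_ne_top {P ν : Measure α} (h : phiDiv φ P ν ≠ ⊤) :
    P ≪ ν := by
  by_contra hPν
  exact h (if_neg hPν)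

lemma phiDiv_of_absolutelyContinuous {P ν : Measure α} (h : P ≪ ν) :
    phiDiv φ P ν = ∫⁻ x, ENNReal.ofReal (φ (P.rnDeriv ν x).toReal) ∂ν :=
  if_pos h

lemma phiDiv_withDensity (μ : Measure α) [SigmaFinite μ] {f : α → ℝ≥0∞} (hf : Measurable f) :
    phiDiv φ (μ.withDensity f) μ = ∫⁻ x, ENNReal.ofReal (φ (f x).toReal) ∂μ := by
  rw [phiDiv_of_absolutelyContinuous (withDensity_absolutelyContinuous μ f)]
  refine lintegral_congr_ae ?_
  filter_upwards [Measure.rnDeriv_withDensity μ hf] with x hx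
  rw [hx]

lemma phiDiv_smul_add_smul_le (hconv : ConvexOn ℝ (Ici 0) φ) (hφ1 : φ 1 = 0) {μ ν : Measure α}
    [IsFiniteMeasure μ] [IsFiniteMeasure ν] (hν : ν ≪ μ) {t : ℝ≥0} (ht : t ≤ 1) :
    phiDiv φ ((1 - t) • μ + t • ν) μ ≤ t * phiDiv φ ν μ := by
  have hac : (1 - t) • μ + t • ν ≪ μ :=
    ((Measure.AbsolutelyContinuous.refl μ).smul_left _).add_left (hν.smul_left _)
  rw [phiDiv_of_absolutelyContinuous hac, phiDiv_of_absolutelyContinuous hν,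
    ← lintegral_const_mul' _ _ ENNReal.coe_ne_top]
  refine lintegral_mono_ae ?_
  filter_upwards [Measure.rnDeriv_add' ((1 - t) • μ) (t • ν) μ,
    Measure.rnDeriv_smul_left' μ μ (1 - t), Measure.rnDeriv_smul_left' ν μ t,
    Measure.rnDeriv_self μ, Measure.rnDeriv_lt_top ν μ] with x hadd hμ hνt hself hfin
  have hval : (((1 - t) • μ + t • ν).rnDeriv μ x).toReal
      = (1 - t : ℝ) * 1 + t * (ν.rnDeriv μ x).toReal := by
    rw [hadd, Pi.add_apply, hμ, hνt, Pi.smul_apply, Pi.smul_apply, hself, ENNReal.smul_def,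
      ENNReal.smul_def, smul_eq_mul, smul_eq_mul, mul_one,
      ENNReal.toReal_add ENNReal.coe_ne_top (ENNReal.mul_ne_top ENNReal.coe_ne_top hfin.ne),
      ENNReal.toReal_mul, ENNReal.coe_toReal, ENNReal.coe_toReal, NNReal.coe_sub ht,
      NNReal.coe_one, mul_one]
  have hconvx := hconv.2 (mem_Ici.2 zero_le_one)
    (mem_Ici.2 (ENNReal.toReal_nonneg (a := ν.rnDeriv μ x)))
    (sub_nonneg.2 (NNReal.coe_le_one.2 ht)) t.coe_nonneg (sub_add_cancel _ _)
  rw [hval, ← ENNReal.ofReal_coe_nnreal, ← ENNReal.ofReal_mul t.coe_nonneg]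
  refine ENNReal.ofReal_le_ofReal (hconvx.trans ?_)
  simp [hφ1]

lemma isProbabilityMeasure_smul_add_smul {μ ν : Measure α} [IsProbabilityMeasure μ]
    [IsProbabilityMeasure ν] {t : ℝ≥0} (ht : t ≤ 1) :
    IsProbabilityMeasure ((1 - t) • μ + t • ν) := by
  constructor
  simp only [Measure.coe_add, Measure.coe_smul, Pi.add_apply, Pi.smul_apply, measure_univ,
    ENNReal.smul_def, smul_eq_mul, mul_one]
  rw [← ENNReal.coe_add, tsub_add_cancel_of_le ht, ENNReal.coe_one]

lemma exists_mem_phiBall_lintegral_eq_top (hconv : ConvexOn ℝ (Ici 0) φ) (hφ1 : φ 1 = 0)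
    {μ ν : Measure α} [IsProbabilityMeasure μ] [IsProbabilityMeasure ν]
    (hν : phiDiv φ ν μ ≠ ⊤) {δ : ℝ} (hδ : 0 < δ) {g : α → ℝ≥0∞} (hg : ∫⁻ x, g x ∂ν = ⊤) :
    ∃ P ∈ phiBall φ δ μ, ∫⁻ x, g x ∂P = ⊤ := by
  obtain ⟨s, hs0, hs⟩ := ENNReal.exists_nnreal_pos_mul_lt hν (ENNReal.ofReal_pos.2 hδ).ne'
  set t := min s 1
  have ht : t ≤ 1 := min_le_right _ _
  have ht0 : (t : ℝ≥0∞) ≠ 0 := ENNReal.coe_ne_zero.2 (lt_min hs0 one_pos).ne'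
  refine ⟨(1 - t) • μ + t • ν, ⟨isProbabilityMeasure_smul_add_smul ht, ?_⟩, ?_⟩
  · calc phiDiv φ ((1 - t) • μ + t • ν) μ
        ≤ t * phiDiv φ ν μ :=
          phiDiv_smul_add_smul_le hconv hφ1 (absolutelyContinuous_of_phiDiv_ne_top hν) ht
      _ ≤ s * phiDiv φ ν μ := by gcongr; exact min_le_left _ _
      _ ≤ ENNReal.ofReal δ := hs.le
  · rw [lintegral_add_measure, lintegral_smul_measure, lintegral_smul_measure, hg,
      ENNReal.smul_top, if_neg (by simpa using ht0)]
    exact add_top _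

end PhiDivergence

section BlockDensity

variable {α ι : Type*} {A : ι → Set α} {b : ι → ℝ}

def blockDensity (A : ι → Set α) (b : ι → ℝ) (x : α) : ℝ≥0∞ :=
  ∑' i, (A i).indicator (fun _ ↦ ENNReal.ofReal (b i)) x

lemma blockDensity_of_mem (hA : Pairwise (Disjoint on A)) {i : ι} {x : α} (hx : x ∈ A i) :
    blockDensity A b x = ENNReal.ofReal (b i) := by
  rw [blockDensity, tsum_eq_single i fun j hji ↦ indicator_of_notMem
    (fun hxj ↦ (hA hji).ne_of_mem hxj hx rfl) _, indicator_of_mem hx]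

lemma blockDensity_of_forall_notMem {x : α} (hx : ∀ i, x ∉ A i) : blockDensity A b x = 0 := by
  simp [blockDensity, indicator_of_notMem (hx _)]

variable [MeasurableSpace α] [Countable ι]

lemma measurable_blockDensity (hA : ∀ i, MeasurableSet (A i)) :
    Measurable (blockDensity A b) :=
  Measurable.tsum fun i ↦ measurable_const.indicator (hA i)

lemma withDensity_blockDensity (μ : Measure α) (hA : ∀ i, MeasurableSet (A i)) :
    μ.withDensity (blockDensity A b)
      = Measure.sum fun i ↦ ENNReal.ofReal (b i) • μ.restrict (A i) := by
  have hsum : blockDensity A b = ∑' i, (A i).indicator fun _ ↦ ENNReal.ofReal (b i) := by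
    ext x
    rw [blockDensity, tsum_apply (Pi.summable.2 fun _ ↦ ENNReal.summable)]
  rw [hsum, withDensity_tsum fun i ↦ measurable_const.indicator (hA i)]
  simp_rw [withDensity_indicator (hA _), withDensity_const]

lemma phiDiv_withDensity_blockDensity_le {φ : ℝ → ℝ} (μ : Measure α) [IsFiniteMeasure μ]
    (hA : ∀ i, MeasurableSet (A i)) (hdisj : Pairwise (Disjoint on A)) (hb : ∀ i, 0 ≤ b i) :
    phiDiv φ (μ.withDensity (blockDensity A b)) μ
      ≤ ENNReal.ofReal (φ 0) * μ univ + ∑' i, ENNReal.ofReal (μ.real (A i) * φ (b i)) := by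
  have hpoint : ∀ x, ENNReal.ofReal (φ (blockDensity A b x).toReal)
      ≤ ENNReal.ofReal (φ 0) + ∑' i, (A i).indicator (fun _ ↦ ENNReal.ofReal (φ (b i))) x := by
    intro x
    by_cases hx : ∃ i, x ∈ A i
    · obtain ⟨i, hi⟩ := hx
      rw [blockDensity_of_mem hdisj hi, ENNReal.toReal_ofReal (hb i)]
      refine le_add_left (le_trans ?_ (ENNReal.le_tsum i))
      rw [indicator_of_mem hi]
    · simp [blockDensity_of_forall_notMem (not_exists.1 hx)]
  rw [phiDiv_withDensity μ (measurable_blockDensity hA)]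
  refine (lintegral_mono hpoint).trans_eq ?_
  rw [lintegral_add_left measurable_const, lintegral_const,
    lintegral_tsum fun i ↦ (measurable_const.indicator (hA i)).aemeasurable]
  congr 1
  refine tsum_congr fun i ↦ ?_
  rw [lintegral_indicator_const (hA i), ENNReal.ofReal_mul measureReal_nonneg,
    ofReal_measureReal, mul_comm]

end BlockDensity

section Tails

variable {μ : Measure ℝ} {f : ℝ → ℝ} {ρ : ℝ}

lemma RegVary.frequently_ne_zero (h : RegVary f ρ) : ∃ᶠ t in atTop, f t ≠ 0 := by
  intro hzero
  have hlim : Tendsto (fun t ↦ f (t * 2) / f t) atTop (𝓝 0) :=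
    tendsto_const_nhds.congr' (hzero.mono fun t ht ↦ by simp [not_not.1 ht])
  exact (Real.rpow_pos_of_pos two_pos ρ).ne' (tendsto_nhds_unique (h 2 two_pos) hlim)

lemma RegVary.eventually_lt_mul (h : RegVary f ρ) (hpos : ∀ᶠ t in atTop, 0 < f t) {x u : ℝ}
    (hx : 0 < x) (hu : x ^ ρ < u) : ∀ᶠ t in atTop, f (t * x) < u * f t := by
  filter_upwards [(h x hx).eventually (gt_mem_nhds hu), hpos] with t ht hft
  rwa [div_lt_iff₀ hft] at ht

lemma RegVary.eventually_mul_lt (h : RegVary f ρ) (hpos : ∀ᶠ t in atTop, 0 < f t) {x l : ℝ}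
    (hx : 0 < x) (hl : l < x ^ ρ) : ∀ᶠ t in atTop, l * f t < f (t * x) := by
  filter_upwards [(h x hx).eventually (lt_mem_nhds hl), hpos] with t ht hft
  rwa [lt_div_iff₀ hft] at ht

lemma survival_nonneg (μ : Measure ℝ) (x : ℝ) : 0 ≤ survival μ x := ENNReal.toReal_nonneg

lemma survival_antitone [IsFiniteMeasure μ] : Antitone (survival μ) :=
  fun _ _ hab ↦ measureReal_mono (Ioi_subset_Ioi hab)

lemma survival_sub_survival [IsFiniteMeasure μ] {a b : ℝ} (hab : a ≤ b) :
    survival μ a - survival μ b = μ.real (Ioc a b) := by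
  rw [survival, survival, ← Ioi_sdiff_Ioi,
    measureReal_sdiff (Ioi_subset_Ioi hab) measurableSet_Ioi]
  rfl

lemma hazard_nonneg [IsProbabilityMeasure μ] (x : ℝ) : 0 ≤ hazard μ x :=
  neg_nonneg.2 (Real.log_nonpos measureReal_nonneg measureReal_le_one)

lemma survival_eq_exp_neg_hazard {x : ℝ} (hx : 0 < survival μ x) :
    survival μ x = Real.exp (-hazard μ x) := by
  rw [hazard, neg_neg, Real.exp_log hx]

lemma survival_pos_of_frequently_ne_zero [IsFiniteMeasure μ]
    (h : ∃ᶠ t in atTop, survival μ t ≠ 0) (x : ℝ) : 0 < survival μ x := by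
  refine (survival_nonneg μ x).lt_of_ne' fun hx ↦ h ?_
  filter_upwards [eventually_ge_atTop x] with t ht
  exact not_not.2 (le_antisymm (hx ▸ survival_antitone ht) (survival_nonneg μ t))

lemma tendsto_survival_atTop (μ : Measure ℝ) [IsFiniteMeasure μ] :
    Tendsto (survival μ) atTop (𝓝 0) := by
  have hempty : ⋂ t : ℝ, Ioi t = ∅ :=
    eq_empty_of_forall_notMem fun x hx ↦ lt_irrefl x (mem_iInter.1 hx x)
  have := tendsto_measure_iInter_atTop (μ := μ) (fun _ ↦ measurableSet_Ioi.nullMeasurableSet)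
    (fun _ _ hab ↦ Ioi_subset_Ioi hab) ⟨0, measure_ne_top μ _⟩
  rw [hempty, measure_empty] at this
  exact (ENNReal.tendsto_toReal ENNReal.zero_ne_top).comp this

lemma tendsto_hazard_atTop [IsFiniteMeasure μ] (hpos : ∀ x, 0 < survival μ x) :
    Tendsto (hazard μ) atTop atTop :=
  tendsto_neg_atBot_atTop.comp <| Real.tendsto_log_nhdsGT_zero.comp <|
    tendsto_nhdsWithin_iff.2 ⟨tendsto_survival_atTop μ, .of_forall hpos⟩

end Tails

namespace HeavyTailed

variable {μ : Measure ℝ} [IsFiniteMeasure μ] {γ : ℝ}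

lemma survival_pos (h : HeavyTailed μ γ) (x : ℝ) : 0 < survival μ x :=
  survival_pos_of_frequently_ne_zero h.frequently_ne_zero x

lemma exists_survival_mul_two_le (h : HeavyTailed μ γ) (hγ : 0 < γ) :
    ∃ c < 1, ∀ᶠ t in atTop, survival μ (t * 2) ≤ c * survival μ t := by
  obtain ⟨c, hγc, hc⟩ :=
    exists_between (Real.rpow_lt_one_of_one_lt_of_neg one_lt_two (neg_neg_of_pos hγ))
  exact ⟨c, hc, (h.eventually_lt_mul (.of_forall h.survival_pos) two_pos hγc).mono
    fun _ ↦ le_of_lt⟩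

lemma eventually_mul_survival_le (h : HeavyTailed μ γ) {θ : ℝ} (hθ : θ < 2 ^ (-γ)) :
    ∀ᶠ t in atTop, θ * survival μ t ≤ survival μ (t * 2) :=
  (h.eventually_mul_lt (.of_forall h.survival_pos) two_pos hθ).mono fun _ ↦ le_of_lt

/-- Each doubling adds at most the constant `log θ⁻¹` to the hazard, which itself diverges. -/
lemma exists_hazard_mul_two_le (h : HeavyTailed μ γ) :
    ∃ u < 2, ∀ᶠ t in atTop, hazard μ (t * 2) ≤ u * hazard μ t := by
  set θ : ℝ := 2 ^ (-γ) / 2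
  have hθ : 0 < θ := by positivity
  refine ⟨3 / 2, by norm_num, ?_⟩
  filter_upwards [h.eventually_mul_survival_le (half_lt_self (by positivity)),
    (tendsto_hazard_atTop h.survival_pos).eventually_ge_atTop (2 * Real.log θ⁻¹)] with t ht hΛ
  have hlog := Real.log_le_log (mul_pos hθ (h.survival_pos t)) ht
  rw [Real.log_mul hθ.ne' (h.survival_pos t).ne', ← neg_neg (Real.log θ), ← Real.log_inv] at hlog
  simp only [hazard] at hΛ ⊢
  linarith

end HeavyTailed

namespace WeibullTailed

variable {μ : Measure ℝ} [IsFiniteMeasure μ] {γ : ℝ}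

lemma survival_pos (h : WeibullTailed μ γ) (x : ℝ) : 0 < survival μ x :=
  survival_pos_of_frequently_ne_zero
    (h.frequently_ne_zero.mono fun t ht hS ↦ ht (by simp [hazard, hS])) x

/-- Once `(l - 1) Λ t ≥ log 2` for some `1 < l < 2 ^ γ`, each doubling adds `log 2` to the
hazard. -/
lemma eventually_survival_mul_two_le (h : WeibullTailed μ γ) (hγ : 0 < γ) :
    ∀ᶠ t in atTop, survival μ (t * 2) ≤ 2⁻¹ * survival μ t := by
  obtain ⟨l, hl1, hlγ⟩ := exists_between (Real.one_lt_rpow one_lt_two hγ)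
  have hΛ := tendsto_hazard_atTop h.survival_pos
  filter_upwards [h.eventually_mul_lt (hΛ.eventually_gt_atTop 0) two_pos hlγ,
    hΛ.eventually_ge_atTop (Real.log 2 / (l - 1))] with t ht hbig
  have hgap : Real.log 2 ≤ (l - 1) * hazard μ t := by
    rwa [div_le_iff₀' (sub_pos.2 hl1)] at hbig
  rw [survival_eq_exp_neg_hazard (h.survival_pos _), survival_eq_exp_neg_hazard (h.survival_pos _),
    ← Real.exp_log (inv_pos.2 two_pos), ← Real.exp_add, Real.log_inv]
  exact Real.exp_le_exp.2 (by nlinarith)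

lemma exists_hazard_mul_two_le (h : WeibullTailed μ γ) (hγ : γ < 1) :
    ∃ u < 2, ∀ᶠ t in atTop, hazard μ (t * 2) ≤ u * hazard μ t := by
  obtain ⟨u, hγu, hu⟩ := exists_between
    (by simpa using Real.rpow_lt_rpow_of_exponent_lt one_lt_two hγ : (2 : ℝ) ^ γ < 2)
  exact ⟨u, hu, (h.eventually_lt_mul ((tendsto_hazard_atTop h.survival_pos).eventually_gt_atTop 0)
    two_pos hγu).mono fun _ ↦ le_of_lt⟩

end WeibullTailed

section Growth

variable {f : ℝ → ℝ}

lemma Continuous.exists_le_add_of_eventually_le {g : ℝ → ℝ} (hf : Continuous f)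
    (hg : ∀ y, 0 ≤ y → 0 ≤ g y) (h : ∀ᶠ y in atTop, f y ≤ g y) :
    ∃ M, 0 ≤ M ∧ ∀ y, 0 ≤ y → f y ≤ M + g y := by
  obtain ⟨X, hX⟩ := eventually_atTop.1 h
  obtain ⟨M, hM⟩ := (isCompact_Icc : IsCompact (Icc 0 X)).bddAbove_image hf.continuousOn
  refine ⟨max M 0, le_max_right _ _, fun y hy ↦ ?_⟩
  rcases le_total y X with hyX | hXy
  · linarith [hM (mem_image_of_mem f ⟨hy, hyX⟩), le_max_left M 0, hg y hy]
  · linarith [hX y hXy, le_max_right M 0]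

lemma ConvexOn.le_mul_rpow_of_doubling {X q : ℝ} (hconv : ConvexOn ℝ (Ici 0) f) (hX : 0 < X)
    (hq : 0 ≤ q) (hfX : 0 ≤ f X) (hdouble : ∀ t ≥ X, f (t * 2) ≤ 2 ^ q * f t) {y : ℝ}
    (hy : X ≤ y) : f y ≤ 2 ^ q * f X / X ^ q * y ^ q := by
  set C := 2 ^ q * f X / X ^ q
  have hC : 0 ≤ C := by positivity
  have hCX : C * X ^ q = 2 ^ q * f X := div_mul_cancel₀ _ (Real.rpow_pos_of_pos hX q).ne'
  have hbase : ∀ y, X ≤ y → y ≤ X * 2 → f y ≤ C * y ^ q := by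
    intro y hXy hy2
    have hseg : y ∈ segment ℝ X (X * 2) := by
      rw [segment_eq_Icc (by linarith)]
      exact ⟨hXy, hy2⟩
    calc f y ≤ max (f X) (f (X * 2)) :=
          hconv.le_on_segment (mem_Ici.2 hX.le) (mem_Ici.2 (by positivity)) hseg
      _ ≤ 2 ^ q * f X := max_le (le_mul_of_one_le_left hfX (Real.one_le_rpow one_le_two hq))
          (hdouble X le_rfl)
      _ ≤ C * y ^ q := hCX ▸ mul_le_mul_of_nonneg_left (Real.rpow_le_rpow hX.le hXy hq) hC
  obtain ⟨n, hn⟩ := pow_unbounded_of_one_lt (y / X) one_lt_two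
  have hyn : y ≤ X * 2 ^ n := by rw [div_lt_iff₀' hX] at hn; exact hn.le
  clear hn
  induction n generalizing y with
  | zero => exact hbase y hy (by linarith)
  | succ n ih =>
    rcases le_total y (X * 2) with hy2 | hy2
    · exact hbase y hy hy2
    · calc f y = f (y / 2 * 2) := by rw [div_mul_cancel₀ _ two_ne_zero]
        _ ≤ 2 ^ q * f (y / 2) := hdouble _ (by linarith)
        _ ≤ 2 ^ q * (C * (y / 2) ^ q) :=
          mul_le_mul_of_nonneg_left (ih (y := y / 2) (by linarith)
            (by rw [pow_succ] at hyn; linarith)) (by positivity)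
        _ = C * y ^ q := by
          rw [Real.div_rpow (by linarith) zero_le_two]
          field_simp

lemma Continuous.exists_le_add_mul_log (hf : Continuous f)
    (hlog : Tendsto (fun x ↦ f x / (x * Real.log x)) atTop (𝓝 1)) :
    ∃ M, 0 ≤ M ∧ ∀ y, 0 ≤ y → f y ≤ M + 2 * (y * Real.log (1 + y)) := by
  refine hf.exists_le_add_of_eventually_le (fun y hy ↦ by
    have := Real.log_nonneg (by linarith : (1 : ℝ) ≤ 1 + y); positivity) ?_
  filter_upwards [hlog.eventually (gt_mem_nhds one_lt_two), eventually_gt_atTop 1] with y hy hy1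
  have hpos : 0 < y * Real.log y := mul_pos (by linarith) (Real.log_pos hy1)
  rw [div_lt_iff₀ hpos] at hy
  have := Real.log_le_log (by linarith) (by linarith : y ≤ 1 + y)
  nlinarith

lemma PhiSmooth.exists_le_add_mul_rpow {φ : ℝ → ℝ} (hφ : PhiSmooth φ) {p q : ℝ}
    (hp : RegVary φ p) (hpq : p < q) (hq : 0 ≤ q) :
    ∃ M C, 0 ≤ M ∧ 0 ≤ C ∧ ∀ y, 0 ≤ y → φ y ≤ M + C * y ^ q := by
  have hpos : ∀ᶠ t in atTop, 0 < φ t := by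
    filter_upwards [hφ.superlinear.eventually_gt_atTop 0, eventually_gt_atTop 0] with t ht ht0
    exact (div_pos_iff_of_pos_right ht0).1 ht
  obtain ⟨X, hX⟩ := eventually_atTop.1 <| (eventually_gt_atTop 0).and <| hpos.and <|
    hp.eventually_lt_mul hpos two_pos (Real.rpow_lt_rpow_of_exponent_lt one_lt_two hpq)
  obtain ⟨hX0, hφX, -⟩ := hX X le_rfl
  have hC : 0 ≤ 2 ^ q * φ X / X ^ q := by positivity
  obtain ⟨M, hM, hφM⟩ := hφ.diff1.continuous.exists_le_add_of_eventually_le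
    (fun y hy ↦ mul_nonneg hC (Real.rpow_nonneg hy q)) <|
    eventually_atTop.2 ⟨X, fun y hy ↦ hφ.convex.le_mul_rpow_of_doubling hX0 hq hφX.le
      (fun t ht ↦ (hX t ht).2.2.le) hy⟩
  exact ⟨M, _, hM, hC, hφM⟩

end Growth

section Perspective

variable {φ : ℝ → ℝ} {M Q w : ℝ}

lemma mul_apply_div_le_of_le_add_mul_log
    (hφ : ∀ y, 0 ≤ y → φ y ≤ M + 2 * (y * Real.log (1 + y))) (hQ : 0 < Q) (hQ1 : Q ≤ 1)
    (hw : 0 ≤ w) (hw1 : w ≤ 1) : Q * φ (w / Q) ≤ Q * M + 2 * w * Real.log (2 / Q) := by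
  have hwQ : 0 ≤ w / Q := div_nonneg hw hQ.le
  have hlog : Real.log (1 + w / Q) ≤ Real.log (2 / Q) := by
    refine Real.log_le_log (by linarith) ?_
    rw [add_div' _ _ _ hQ.ne', div_le_div_iff_of_pos_right hQ]
    linarith
  calc Q * φ (w / Q) ≤ Q * (M + 2 * (w / Q * Real.log (1 + w / Q))) :=
        mul_le_mul_of_nonneg_left (hφ _ hwQ) hQ.le
    _ = Q * M + 2 * w * Real.log (1 + w / Q) := by field_simp
    _ ≤ Q * M + 2 * w * Real.log (2 / Q) := by gcongr

lemma mul_apply_div_le_of_le_add_mul_rpow {C q : ℝ} (hφ : ∀ y, 0 ≤ y → φ y ≤ M + C * y ^ q)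
    (hQ : 0 < Q) (hw : 0 ≤ w) : Q * φ (w / Q) ≤ Q * M + C * (w ^ q * Q ^ (1 - q)) := by
  calc Q * φ (w / Q) ≤ Q * (M + C * (w / Q) ^ q) :=
        mul_le_mul_of_nonneg_left (hφ _ (div_nonneg hw hQ.le)) hQ.le
    _ = Q * M + C * (w ^ q * Q ^ (1 - q)) := by
        rw [Real.div_rpow hw hQ.le, Real.rpow_sub hQ, Real.rpow_one]
        field_simp

end Perspective

section Summable

lemma summable_of_nonneg_of_succ_le_mul {f : ℕ → ℝ} (hf : ∀ n, 0 ≤ f n) {r : ℝ} (hr : r < 1)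
    (h : ∀ n, f (n + 1) ≤ r * f n) : Summable f :=
  summable_of_ratio_norm_eventually_le hr <| .of_forall fun n ↦ by
    simpa only [Real.norm_of_nonneg (hf _)] using h n

lemma summable_inv_two_pow_mul_of_succ_le {a : ℕ → ℝ} (ha : ∀ n, 0 ≤ a n) {u : ℝ} (hu : u < 2)
    (h : ∀ n, a (n + 1) ≤ u * a n) : Summable fun n ↦ (2⁻¹ : ℝ) ^ (n + 1) * a n := by
  refine summable_of_nonneg_of_succ_le_mul (fun n ↦ mul_nonneg (by positivity) (ha n))
    (by linarith : u / 2 < 1) fun n ↦ ?_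
  rw [pow_succ _ (n + 1)]
  nlinarith [h n, ha n, pow_pos (by norm_num : (0 : ℝ) < 2⁻¹) (n + 1)]

lemma summable_inv_two_pow_rpow_mul_rpow_of_mul_le {s : ℕ → ℝ} (hs : ∀ n, 0 < s n)
    {θ q : ℝ} (hθ : 0 < θ) (hq : 1 ≤ q) (hθq : 2⁻¹ ^ q * θ ^ (1 - q) < 1)
    (h : ∀ n, θ * s n ≤ s (n + 1)) :
    Summable fun n ↦ ((2⁻¹ : ℝ) ^ (n + 1)) ^ q * s n ^ (1 - q) := by
  refine summable_of_nonneg_of_succ_le_mul (fun n ↦ by have := hs n; positivity) hθq fun n ↦ ?_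
  have hmono : s (n + 1) ^ (1 - q) ≤ θ ^ (1 - q) * s n ^ (1 - q) := by
    rw [← Real.mul_rpow hθ.le (hs n).le]
    exact Real.rpow_le_rpow_of_nonpos (mul_pos hθ (hs n)) (h n) (by linarith)
  rw [pow_succ' _ (n + 1), Real.mul_rpow (by norm_num) (by positivity)]
  calc _ ≤ 2⁻¹ ^ q * ((2⁻¹ : ℝ) ^ (n + 1)) ^ q * (θ ^ (1 - q) * s n ^ (1 - q)) :=
        mul_le_mul_of_nonneg_left hmono (by positivity)
    _ = _ := by ring

lemma hasSum_inv_two_pow_succ : HasSum (fun j : ℕ ↦ (2⁻¹ : ℝ) ^ (j + 1)) 1 := by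
  convert hasSum_geometric_two' 1 using 2 with j
  rw [pow_succ', inv_pow]
  ring

lemma inv_two_rpow_mul_two_rpow_neg_lt_one {q γ : ℝ} (hγ : 1 < γ) (hq : q < γ / (γ - 1)) :
    2⁻¹ ^ q * ((2 : ℝ) ^ (-γ)) ^ (1 - q) < 1 := by
  rw [Real.inv_rpow zero_le_two, ← Real.rpow_neg zero_le_two, ← Real.rpow_mul zero_le_two,
    ← Real.rpow_add two_pos]
  rw [lt_div_iff₀ (by linarith)] at hq
  exact Real.rpow_lt_one_of_one_lt_of_neg one_lt_two (by nlinarith)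

end Summable

section Dyadic

variable {μ : Measure ℝ} {x₀ : ℝ}

def dyadicBlock (x₀ : ℝ) (j : ℕ) : Set ℝ := Ioc (x₀ * 2 ^ j) (x₀ * 2 ^ (j + 1))

lemma pairwise_disjoint_dyadicBlock (hx₀ : 0 ≤ x₀) : Pairwise (Disjoint on dyadicBlock x₀) :=
  Monotone.pairwise_disjoint_on_Ioc_succ fun _ _ hij ↦
    mul_le_mul_of_nonneg_left (pow_le_pow_right₀ one_le_two hij) hx₀

lemma le_mul_two_pow (hx₀ : 0 ≤ x₀) (j : ℕ) : x₀ ≤ x₀ * 2 ^ j :=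
  le_mul_of_one_le_right hx₀ (one_le_pow₀ one_le_two)

lemma exists_pos_forall_mul_two_pow {P : ℝ → Prop} (h : ∀ᶠ t in atTop, P t) :
    ∃ x₀ > 0, ∀ j : ℕ, P (x₀ * 2 ^ j) := by
  obtain ⟨x₀, hx₀⟩ := eventually_atTop.1 ((eventually_gt_atTop 0).and h)
  have hx0 : 0 < x₀ := (hx₀ x₀ le_rfl).1
  exact ⟨x₀, hx0, fun j ↦ (hx₀ _ (le_mul_two_pow hx0.le j)).2⟩

lemma mul_two_pow_succ (x₀ : ℝ) (j : ℕ) : x₀ * 2 ^ (j + 1) = x₀ * 2 ^ j * 2 := by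
  rw [pow_succ, mul_assoc]

lemma measureReal_dyadicBlock [IsFiniteMeasure μ] (hx₀ : 0 ≤ x₀) (j : ℕ) :
    μ.real (dyadicBlock x₀ j) = survival μ (x₀ * 2 ^ j) - survival μ (x₀ * 2 ^ j * 2) := by
  rw [survival_sub_survival (by linarith [le_mul_two_pow hx₀ j, mul_two_pow_succ x₀ j]),
    dyadicBlock, mul_two_pow_succ]

lemma measureReal_dyadicBlock_le [IsFiniteMeasure μ] (hx₀ : 0 ≤ x₀) (j : ℕ) :
    μ.real (dyadicBlock x₀ j) ≤ survival μ (x₀ * 2 ^ j) := by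
  rw [measureReal_dyadicBlock hx₀]
  linarith [survival_nonneg μ (x₀ * 2 ^ j * 2)]

lemma mul_survival_le_measureReal_dyadicBlock [IsFiniteMeasure μ] (hx₀ : 0 ≤ x₀) {j : ℕ} {c : ℝ}
    (h : survival μ (x₀ * 2 ^ j * 2) ≤ c * survival μ (x₀ * 2 ^ j)) :
    (1 - c) * survival μ (x₀ * 2 ^ j) ≤ μ.real (dyadicBlock x₀ j) := by
  rw [measureReal_dyadicBlock hx₀]
  linarith

def dyadicReweight (μ : Measure ℝ) (x₀ : ℝ) : Measure ℝ :=
  μ.withDensity (blockDensity (dyadicBlock x₀) fun j ↦ 2⁻¹ ^ (j + 1) / μ.real (dyadicBlock x₀ j))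

lemma dyadicReweight_eq_sum (μ : Measure ℝ) (x₀ : ℝ) :
    dyadicReweight μ x₀ = Measure.sum fun j ↦
      ENNReal.ofReal (2⁻¹ ^ (j + 1) / μ.real (dyadicBlock x₀ j)) • μ.restrict (dyadicBlock x₀ j) :=
  withDensity_blockDensity μ fun _ ↦ measurableSet_Ioc

lemma ofReal_div_measureReal_mul {s : Set ℝ} [IsFiniteMeasure μ] (hs : 0 < μ.real s) {w : ℝ}
    (hw : 0 ≤ w) : ENNReal.ofReal (w / μ.real s) * μ s = ENNReal.ofReal w := by
  rw [← ofReal_measureReal, ← ENNReal.ofReal_mul (div_nonneg hw hs.le), div_mul_cancel₀ _ hs.ne']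

lemma isProbabilityMeasure_dyadicReweight [IsFiniteMeasure μ]
    (hQ : ∀ j, 0 < μ.real (dyadicBlock x₀ j)) : IsProbabilityMeasure (dyadicReweight μ x₀) := by
  constructor
  simp_rw [dyadicReweight_eq_sum, Measure.sum_apply _ MeasurableSet.univ, Measure.smul_apply,
    Measure.restrict_apply_univ, smul_eq_mul,
    ofReal_div_measureReal_mul (hQ _) (pow_nonneg (inv_nonneg.2 zero_le_two) _)]
  rw [← ENNReal.ofReal_tsum_of_nonneg (fun _ ↦ pow_nonneg (inv_nonneg.2 zero_le_two) _)
    hasSum_inv_two_pow_succ.summable, hasSum_inv_two_pow_succ.tsum_eq, ENNReal.ofReal_one]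

lemma lintegral_posPart_dyadicReweight_eq_top [IsFiniteMeasure μ] (hx₀ : 0 < x₀)
    (hQ : ∀ j, 0 < μ.real (dyadicBlock x₀ j)) :
    ∫⁻ z, ENNReal.ofReal (max z 0) ∂dyadicReweight μ x₀ = ⊤ := by
  rw [dyadicReweight_eq_sum, lintegral_sum_measure, eq_top_iff,
    ← ENNReal.tsum_const_eq_top_of_ne_zero (α := ℕ) (ENNReal.ofReal_pos.2 (half_pos hx₀)).ne']
  refine ENNReal.tsum_le_tsum fun j ↦ ?_
  rw [lintegral_smul_measure, smul_eq_mul]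
  calc ENNReal.ofReal (x₀ / 2)
      = ENNReal.ofReal (2⁻¹ ^ (j + 1) / μ.real (dyadicBlock x₀ j))
          * ∫⁻ _ in dyadicBlock x₀ j, ENNReal.ofReal (x₀ * 2 ^ j) ∂μ := by
        rw [setLIntegral_const, mul_comm _ (μ _), ← mul_assoc,
          ofReal_div_measureReal_mul (hQ j) (pow_nonneg (inv_nonneg.2 zero_le_two) _),
          ← ENNReal.ofReal_mul (pow_nonneg (inv_nonneg.2 zero_le_two) _)]
        congr 1
        rw [pow_succ, inv_pow]
        field_simp
    _ ≤ _ := mul_le_mul_right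
        (setLIntegral_mono (measurable_id.max measurable_const).ennreal_ofReal
          fun z hz ↦ ENNReal.ofReal_le_ofReal (hz.1.le.trans (le_max_left _ _))) _

theorem exists_mem_phiBall_of_summable_dyadicBlock {φ : ℝ → ℝ} (hconv : ConvexOn ℝ (Ici 0) φ)
    (hφ1 : φ 1 = 0) [IsProbabilityMeasure μ] (hx₀ : 0 < x₀)
    (hQ : ∀ j, 0 < μ.real (dyadicBlock x₀ j)) {F : ℕ → ℝ} (hF : Summable F)
    (hle : ∀ j, μ.real (dyadicBlock x₀ j) * φ (2⁻¹ ^ (j + 1) / μ.real (dyadicBlock x₀ j)) ≤ F j)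
    {δ : ℝ} (hδ : 0 < δ) :
    ∃ P ∈ phiBall φ δ μ, ∫⁻ z, ENNReal.ofReal (max z 0) ∂P = ⊤ := by
  have := isProbabilityMeasure_dyadicReweight hQ
  refine exists_mem_phiBall_lintegral_eq_top hconv hφ1 (ν := dyadicReweight μ x₀) ?_ hδ
    (lintegral_posPart_dyadicReweight_eq_top hx₀ hQ)
  refine ne_top_of_le_ne_top ?_ (phiDiv_withDensity_blockDensity_le μ (fun _ ↦ measurableSet_Ioc)
    (pairwise_disjoint_dyadicBlock hx₀.le) fun j ↦ div_nonneg (by positivity) measureReal_nonneg)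
  exact ENNReal.add_ne_top.2 ⟨ENNReal.mul_ne_top ENNReal.ofReal_ne_top (measure_ne_top μ _),
    ne_top_of_le_ne_top hF.tsum_ofReal_ne_top
      (ENNReal.tsum_le_tsum fun j ↦ ENNReal.ofReal_le_ofReal (hle j))⟩

end Dyadic

section Cases

variable {μ : Measure ℝ} {φ : ℝ → ℝ}

theorem exists_mem_phiBall_of_le_add_mul_log (hconv : ConvexOn ℝ (Ici 0) φ) (hφ1 : φ 1 = 0)
    {M : ℝ} (hM0 : 0 ≤ M) (hM : ∀ y, 0 ≤ y → φ y ≤ M + 2 * (y * Real.log (1 + y)))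
    [IsProbabilityMeasure μ] (hpos : ∀ t, 0 < survival μ t)
    (hS : ∃ c < 1, ∀ᶠ t in atTop, survival μ (t * 2) ≤ c * survival μ t)
    (hΛ : ∃ u < 2, ∀ᶠ t in atTop, hazard μ (t * 2) ≤ u * hazard μ t) {δ : ℝ} (hδ : 0 < δ) :
    ∃ P ∈ phiBall φ δ μ, ∫⁻ z, ENNReal.ofReal (max z 0) ∂P = ⊤ := by
  obtain ⟨c, hc, hcS⟩ := hS
  obtain ⟨u, hu, huΛ⟩ := hΛ
  obtain ⟨x₀, hx0, hstep⟩ := exists_pos_forall_mul_two_pow (hcS.and huΛ)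
  have hsc (j : ℕ) : 0 < (1 - c) * survival μ (x₀ * 2 ^ j) := mul_pos (sub_pos.2 hc) (hpos _)
  have hQlow (j : ℕ) := mul_survival_le_measureReal_dyadicBlock hx0.le (hstep j).1
  have hQ (j : ℕ) : 0 < μ.real (dyadicBlock x₀ j) := (hsc j).trans_le (hQlow j)
  have hs : Summable fun j : ℕ ↦ survival μ (x₀ * 2 ^ j) :=
    summable_of_nonneg_of_succ_le_mul (fun _ ↦ survival_nonneg μ _) hc fun j ↦ by
      rw [mul_two_pow_succ]; exact (hstep j).1
  have hΛs : Summable fun j : ℕ ↦ (2⁻¹ : ℝ) ^ (j + 1) * hazard μ (x₀ * 2 ^ j) :=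
    summable_inv_two_pow_mul_of_succ_le (fun _ ↦ hazard_nonneg _) hu fun j ↦ by
      rw [mul_two_pow_succ]; exact (hstep j).2
  refine exists_mem_phiBall_of_summable_dyadicBlock hconv hφ1 hx0 hQ ((hs.mul_left M).add
      (((Summable.mul_right (Real.log (2 / (1 - c))) hasSum_inv_two_pow_succ.summable).add
        hΛs).mul_left 2))
    (fun j ↦ (mul_apply_div_le_of_le_add_mul_log hM (hQ j) measureReal_le_one (by positivity)
      (pow_le_one₀ (by norm_num) (by norm_num))).trans ?_) hδ
  have hlog : Real.log (2 / μ.real (dyadicBlock x₀ j))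
      ≤ Real.log (2 / (1 - c)) + hazard μ (x₀ * 2 ^ j) := by
    rw [hazard, ← sub_eq_add_neg, ← Real.log_div (div_pos two_pos (sub_pos.2 hc)).ne'
      (hpos _).ne', div_div]
    exact Real.log_le_log (div_pos two_pos (hQ j))
      (div_le_div_of_nonneg_left zero_le_two (hsc j) (hQlow j))
  have := measureReal_dyadicBlock_le (μ := μ) hx0.le j
  have : (0 : ℝ) ≤ 2⁻¹ ^ (j + 1) := by positivity
  nlinarith

theorem exists_mem_phiBall_of_le_add_mul_rpow (hconv : ConvexOn ℝ (Ici 0) φ) (hφ1 : φ 1 = 0)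
    {M C q : ℝ} (hM0 : 0 ≤ M) (hC0 : 0 ≤ C) (hq : 1 ≤ q)
    (hφ : ∀ y, 0 ≤ y → φ y ≤ M + C * y ^ q) [IsProbabilityMeasure μ]
    (hpos : ∀ t, 0 < survival μ t)
    (hS : ∃ c < 1, ∀ᶠ t in atTop, survival μ (t * 2) ≤ c * survival μ t) {θ : ℝ} (hθ : 0 < θ)
    (hθq : 2⁻¹ ^ q * θ ^ (1 - q) < 1)
    (hθS : ∀ᶠ t in atTop, θ * survival μ t ≤ survival μ (t * 2)) {δ : ℝ} (hδ : 0 < δ) :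
    ∃ P ∈ phiBall φ δ μ, ∫⁻ z, ENNReal.ofReal (max z 0) ∂P = ⊤ := by
  obtain ⟨c, hc, hcS⟩ := hS
  obtain ⟨x₀, hx0, hstep⟩ := exists_pos_forall_mul_two_pow (hcS.and hθS)
  have hsc (j : ℕ) : 0 < (1 - c) * survival μ (x₀ * 2 ^ j) := mul_pos (sub_pos.2 hc) (hpos _)
  have hQlow (j : ℕ) := mul_survival_le_measureReal_dyadicBlock hx0.le (hstep j).1
  have hQ (j : ℕ) : 0 < μ.real (dyadicBlock x₀ j) := (hsc j).trans_le (hQlow j)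
  have hs : Summable fun j : ℕ ↦ survival μ (x₀ * 2 ^ j) :=
    summable_of_nonneg_of_succ_le_mul (fun _ ↦ survival_nonneg μ _) hc fun j ↦ by
      rw [mul_two_pow_succ]; exact (hstep j).1
  have hws : Summable fun j : ℕ ↦
      ((2⁻¹ : ℝ) ^ (j + 1)) ^ q * survival μ (x₀ * 2 ^ j) ^ (1 - q) :=
    summable_inv_two_pow_rpow_mul_rpow_of_mul_le (fun _ ↦ hpos _) hθ hq hθq fun j ↦ by
      rw [mul_two_pow_succ]; exact (hstep j).2
  refine exists_mem_phiBall_of_summable_dyadicBlock hconv hφ1 hx0 hQ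
    ((hs.mul_left M).add (hws.mul_left (C * (1 - c) ^ (1 - q))))
    (fun j ↦ (mul_apply_div_le_of_le_add_mul_rpow hφ (hQ j) (by positivity)).trans ?_) hδ
  have hQq : μ.real (dyadicBlock x₀ j) ^ (1 - q)
      ≤ (1 - c) ^ (1 - q) * survival μ (x₀ * 2 ^ j) ^ (1 - q) := by
    rw [← Real.mul_rpow (sub_pos.2 hc).le (survival_nonneg μ _)]
    exact Real.rpow_le_rpow_of_nonpos (hsc j) (hQlow j) (by linarith)
  have := measureReal_dyadicBlock_le (μ := μ) hx0.le j
  have : (0 : ℝ) ≤ C * ((2⁻¹ : ℝ) ^ (j + 1)) ^ q := by positivity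
  nlinarith

end Cases

/-- contents of the φ-divergence ball, infinite-mean alternatives.
(a) If `φ(x) ~ x log x` and `P₀` is heavy-tailed with `γ > 1` or Weibull-type with `γ < 1`,
the ball contains a distribution with infinite positive-part mean.
(b) If `φ ∈ RV(p)` with `p > 1` and `P₀` is heavy-tailed with `1 < γ < p/(p-1)`,
the same conclusion holds. -/
theorem phiBall_contains_infinite_mean
    (φ : ℝ → ℝ) (δ : ℝ) (hδ : 0 < δ) (hφ : PhiSmooth φ)
    (P₀ : Measure ℝ) [IsProbabilityMeasure P₀] :
    ((Tendsto (fun x : ℝ => φ x / (x * Real.log x)) atTop (𝓝 1)) →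
      ∀ γ : ℝ, ((1 < γ ∧ HeavyTailed P₀ γ) ∨ (0 < γ ∧ γ < 1 ∧ WeibullTailed P₀ γ)) →
      ∃ P₁ ∈ phiBall φ δ P₀, (∫⁻ z, ENNReal.ofReal (max z 0) ∂P₁) = ⊤) ∧
    (∀ p γ : ℝ, 1 < p → RegVary φ p → 1 < γ → γ < p / (p - 1) → HeavyTailed P₀ γ →
      ∃ P₁ ∈ phiBall φ δ P₀, (∫⁻ z, ENNReal.ofReal (max z 0) ∂P₁) = ⊤) := by
  refine ⟨fun hlog γ hγ ↦ ?_, fun p γ hp hφp hγ1 hγp hP₀ ↦ ?_⟩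
  · obtain ⟨M, hM0, hM⟩ := hφ.diff1.continuous.exists_le_add_mul_log hlog
    rcases hγ with ⟨hγ1, hP₀⟩ | ⟨hγ0, hγ1, hP₀⟩
    · exact exists_mem_phiBall_of_le_add_mul_log hφ.convex hφ.at_one hM0 hM hP₀.survival_pos
        (hP₀.exists_survival_mul_two_le (by linarith)) hP₀.exists_hazard_mul_two_le hδ
    · exact exists_mem_phiBall_of_le_add_mul_log hφ.convex hφ.at_one hM0 hM hP₀.survival_pos
        ⟨2⁻¹, by norm_num, hP₀.eventually_survival_mul_two_le hγ0⟩
        (hP₀.exists_hazard_mul_two_le hγ1) hδ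
  · obtain ⟨γ', hγγ', hγ'p⟩ := exists_between hγp
    have hγ'1 : 1 < γ' := hγ1.trans hγγ'
    have hpγ' : p < γ' / (γ' - 1) := by
      rw [lt_div_iff₀ (by linarith)]
      rw [lt_div_iff₀ (by linarith)] at hγ'p
      linarith
    obtain ⟨q, hpq, hqγ'⟩ := exists_between hpγ'
    obtain ⟨M, C, hM0, hC0, hMC⟩ := hφ.exists_le_add_mul_rpow hφp hpq (by linarith)
    exact exists_mem_phiBall_of_le_add_mul_rpow hφ.convex hφ.at_one hM0 hC0 (by linarith) hMC
      hP₀.survival_pos (hP₀.exists_survival_mul_two_le (by linarith)) (by positivity)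
      (inv_two_rpow_mul_two_rpow_neg_lt_one hγ'1 hqγ')
      (hP₀.eventually_mul_survival_le
        (Real.rpow_lt_rpow_of_exponent_lt one_lt_two (neg_lt_neg hγγ'))) hδ

end
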